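/- arXiv:1909.05434 — 2 statements merged into one kernel-verified Lean document; each statement's English description precedes it below -/
import Mathlib

section
/- Let G be a simple graph on a vertex type V and let A, B, C, D be sets of vertices. Suppose (i) every walk in G whose first vertex lies in A and whose last vertex lies in C contains a vertex of B, and (ii) every walk in G whose first vertex lies in A and whose last vertex lies in D contains a vertex of C. Then every walk in G whose first vertex lies in A and whose last vertex lies in D contains a vertex of B. -/
/-- (Combinatorial core of Lemma 1.)
If every walk from `A` to `C` contains a vertex of `B`, and every walk from `A` to `D`
contains a vertex of `C`, then every walk from `A` to `D` contains a vertex of `B`. -/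
theorem walk_block_trans {V : Type*} (G : SimpleGraph V) (A B C D : Set V)
    (h1 : ∀ ⦃u v : V⦄ (w : G.Walk u v), u ∈ A → v ∈ C → ∃ x ∈ B, x ∈ w.support)
    (h2 : ∀ ⦃u v : V⦄ (w : G.Walk u v), u ∈ A → v ∈ D → ∃ x ∈ C, x ∈ w.support) :
    ∀ ⦃u v : V⦄ (w : G.Walk u v), u ∈ A → v ∈ D → ∃ x ∈ B, x ∈ w.support := by
  classical
  intro u v w hu hv
  obtain ⟨x, hxC, hxw⟩ := h2 w hu hv
  obtain ⟨b, hbB, hb⟩ := h1 (w.takeUntil x hxw) hu hxC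
  exact ⟨b, hbB, (w.support_takeUntil_subset hxw) hb⟩
end

section
/- Let B = (B_1, …, B_m), C = (C_1, …, C_n), Y, Z = (Z_1, …, Z_n) and Λ be random variables on a probability space, each taking values in a finite type. Suppose: (i) Λ is (unconditionally) independent of the pair (Y, Z); (ii) B is conditionally independent of Z given Λ; (iii) the pair (B, C) is conditionally independent of Y given the pair (Z, Λ); (iv) for each i, C_i is conditionally independent of the tuple (C_j)_{j ≠ i} given (Z, Λ); (v) for each i, C_i is conditionally independent of the tuple (Z_j)_{j ≠ i} given (Z_i, Λ); (vi) the tuple B is determined by Λ, i.e. B = f ∘ Λ for some function f. Then for all values b, c, y, z with P(Y = y, Z = z) > 0: P(B = b, C = c | Y = y, Z = z) = Σ_λ P(Λ = λ) · ( Π_{j=1}^n P(C_j = c_j | Z_j = z_j, Λ = λ) ) · ( Π_{k=1}^m P(B_k = b_k | Λ = λ) ), where the sum ranges over all λ with P(Λ = λ) > 0 (all conditional probabilities on the right are well defined since, by (i), P(Z_j = z_j, Λ = λ) > 0 for such λ). -/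
open MeasureTheory

/-- Conditional probability `P(s | t) = P(s ∩ t) / P(t)`. -/
noncomputable def condProb {Ω : Type*} [MeasurableSpace Ω] (P : Measure Ω)
    (s t : Set Ω) : ENNReal :=
  P (s ∩ t) / P t

/-- `X` is conditionally independent of `Y` given `Z`: for all values `x, y, z` with
`P(Z = z) > 0`, `P(X = x, Y = y | Z = z) = P(X = x | Z = z) · P(Y = y | Z = z)`. -/
def CondIndepFun {Ω α β γ : Type*} [MeasurableSpace Ω] (P : Measure Ω)
    (X : Ω → α) (Y : Ω → β) (Z : Ω → γ) : Prop :=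
  ∀ (x : α) (y : β) (z : γ), 0 < P {ω | Z ω = z} →
    condProb P {ω | X ω = x ∧ Y ω = y} {ω | Z ω = z} =
      condProb P {ω | X ω = x} {ω | Z ω = z} * condProb P {ω | Y ω = y} {ω | Z ω = z}

open scoped Classical

/-!
Split `P(B = b, C = c, Y = y, Z = z)` along the values `l` of `Λ`. On the cell `Λ = l`,
(iii) factors off `Y`, and (i) turns `P(Y = y, Z = z, Λ = l)` into
`P(Λ = l) · P(Y = y, Z = z)`. Since `B = f ∘ Λ`, given `Λ = l` the event `B = b` is certain
or impossible according as `f l = b`, and so is `∏ₖ P(Bₖ = bₖ | Λ = l)`. Given `(Z, Λ)`,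
each `Cᵢ` is independent of all the other `Cⱼ` together, so (after marginalising) the `Cⱼ`
are mutually independent; finally (v) lets the factor of `Cⱼ` condition on `(Zⱼ, Λ)` alone.
-/

open scoped ProbabilityTheory

section CondProb

variable {Ω : Type*} [MeasurableSpace Ω] {P : Measure Ω} {s t u w : Set Ω}

lemma condProb_mul_measure [IsFiniteMeasure P] (s t : Set Ω) :
    condProb P s t * P t = P (s ∩ t) :=
  ENNReal.div_mul_cancel' (measure_mono_null Set.inter_subset_right)
    fun h => (measure_ne_top P t h).elim

lemma condProb_eq_cond (hs : MeasurableSet s) (t : Set Ω) : condProb P s t = P[s | t] := by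
  rw [condProb, ProbabilityTheory.cond_apply' hs, Set.inter_comm, ENNReal.div_eq_inv_mul]

lemma measure_inter_inter_eq_condProb_mul [IsFiniteMeasure P]
    (h : condProb P (s ∩ w) u = condProb P s u * condProb P w u) :
    P (s ∩ w ∩ u) = condProb P s u * P (w ∩ u) := by
  rw [← condProb_mul_measure, h, mul_assoc, condProb_mul_measure]

lemma condProb_inter_eq_of_condProb_inter_eq_mul [IsFiniteMeasure P] (hwu : P (w ∩ u) ≠ 0)
    (h : condProb P (s ∩ w) u = condProb P s u * condProb P w u) :
    condProb P s (w ∩ u) = condProb P s u := by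
  rw [condProb, ← Set.inter_assoc, measure_inter_inter_eq_condProb_mul h,
    ENNReal.mul_div_cancel_right hwu (measure_ne_top P _)]

lemma condProb_eq_one_of_subset [IsFiniteMeasure P] (ht : P t ≠ 0) (hts : t ⊆ s) :
    condProb P s t = 1 := by
  rw [condProb, Set.inter_eq_right.2 hts, ENNReal.div_self ht (measure_ne_top P t)]

lemma condProb_eq_zero_of_disjoint (hst : Disjoint s t) : condProb P s t = 0 := by
  rw [condProb, hst.inter_eq, measure_empty, ENNReal.zero_div]

end CondProb

section CondIndepFun

variable {Ω α β γ : Type*} [MeasurableSpace Ω] {P : Measure Ω} {X : Ω → α} {Y : Ω → β}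
  {Z : Ω → γ}

lemma CondIndepFun.measure_inter [IsFiniteMeasure P] (h : CondIndepFun P X Y Z) (x : α) (y : β)
    {z : γ} (hz : 0 < P {ω | Z ω = z}) :
    P ({ω | X ω = x} ∩ {ω | Y ω = y} ∩ {ω | Z ω = z}) =
      condProb P {ω | X ω = x} {ω | Z ω = z} * P ({ω | Y ω = y} ∩ {ω | Z ω = z}) :=
  measure_inter_inter_eq_condProb_mul (h x y z hz)

lemma CondIndepFun.condProb_inter [IsFiniteMeasure P] (h : CondIndepFun P X Y Z) (x : α) {y : β}
    {z : γ} (hyz : P ({ω | Y ω = y} ∩ {ω | Z ω = z}) ≠ 0) :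
    condProb P {ω | X ω = x} ({ω | Y ω = y} ∩ {ω | Z ω = z}) =
      condProb P {ω | X ω = x} {ω | Z ω = z} :=
  condProb_inter_eq_of_condProb_inter_eq_mul hyz
    (h x y z (pos_iff_ne_zero.2 fun h0 => hyz (measure_mono_null Set.inter_subset_right h0)))

lemma CondIndepFun.cond_inter [MeasurableSpace α] [MeasurableSpace β]
    [MeasurableSingletonClass α] [MeasurableSingletonClass β] (h : CondIndepFun P X Y Z)
    (hX : Measurable X) (hY : Measurable Y) (x : α) (y : β) {z : γ} (hz : 0 < P {ω | Z ω = z}) :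
    P[{ω | X ω = x} ∩ {ω | Y ω = y} | {ω | Z ω = z}] =
      P[{ω | X ω = x} | {ω | Z ω = z}] * P[{ω | Y ω = y} | {ω | Z ω = z}] := by
  have hx : MeasurableSet {ω | X ω = x} := hX (measurableSet_singleton x)
  have hy : MeasurableSet {ω | Y ω = y} := hY (measurableSet_singleton y)
  rw [← condProb_eq_cond (hx.inter hy), ← condProb_eq_cond hx, ← condProb_eq_cond hy]
  exact h x y z hz

end CondIndepFun

section Fibers

variable {Ω β : Type*} [MeasurableSpace Ω] [MeasurableSpace β] [MeasurableSingletonClass β]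
  {ν : Measure Ω} {Y : Ω → β}

lemma measure_inter_preimage_eq_mul_of_fibers (hY : Measurable Y) {s : Set Ω}
    (h : ∀ y, ν (s ∩ Y ⁻¹' {y}) = ν s * ν (Y ⁻¹' {y})) (S : Finset β) :
    ν (s ∩ Y ⁻¹' S) = ν s * ν (Y ⁻¹' S) := by
  have hfib : ∀ y ∈ S, MeasurableSet (Y ⁻¹' {y}) := fun y _ => hY (measurableSet_singleton y)
  -- Computing in `ν.restrict s` spares a measurability assumption on `s`.
  rw [Set.inter_comm, ← Measure.restrict_apply (hY S.finite_toSet.measurableSet),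
    ← sum_measure_preimage_singleton S hfib, ← sum_measure_preimage_singleton S hfib,
    Finset.mul_sum]
  refine Finset.sum_congr rfl fun y hy => ?_
  rw [Measure.restrict_apply (hfib y hy), Set.inter_comm, h]

lemma measure_eq_sum_inter_fiber [Fintype β] (hY : Measurable Y) (s : Set Ω) :
    ν s = ∑ y, ν (s ∩ {ω | Y ω = y}) := by
  have hfib : ∀ y ∈ (Finset.univ : Finset β), MeasurableSet (Y ⁻¹' {y}) :=
    fun y _ => hY (measurableSet_singleton y)
  rw [← Measure.restrict_apply_univ, ← Set.preimage_univ (f := Y), ← Finset.coe_univ,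
    ← sum_measure_preimage_singleton _ hfib]
  refine Finset.sum_congr rfl fun y hy => ?_
  rw [Measure.restrict_apply (hfib y hy), Set.inter_comm]
  rfl

lemma measure_eq_sum_inter_fiber_pos [Fintype β] (hY : Measurable Y) (s : Set Ω) :
    ν s = ∑ y ∈ Finset.univ.filter (fun y => 0 < ν {ω | Y ω = y}), ν (s ∩ {ω | Y ω = y}) := by
  rw [Finset.sum_filter_of_ne, measure_eq_sum_inter_fiber hY]
  intro y _ hy
  exact pos_iff_ne_zero.2 fun h0 => hy (measure_mono_null Set.inter_subset_right h0)

end Fibers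

section Factorisation

variable {Ω ι δ : Type*} [MeasurableSpace Ω] {P : Measure Ω}

lemma measure_forall_eq_prod_of_indep_rest [Fintype ι] {χ : ι → Type*}
    [∀ i, Fintype (χ i)] [∀ i, MeasurableSpace (χ i)] [∀ i, MeasurableSingletonClass (χ i)]
    {C : ∀ i, Ω → χ i} {ν : Measure Ω} [IsProbabilityMeasure ν]
    (hC : ∀ i, Measurable (C i)) (c : ∀ i, χ i)
    (h : ∀ i (v : ∀ j : {j // j ≠ i}, χ j),
      ν ({ω | C i ω = c i} ∩ {ω | (fun j : {j // j ≠ i} => C j ω) = v}) =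
        ν {ω | C i ω = c i} * ν {ω | (fun j : {j // j ≠ i} => C j ω) = v}) :
    ν {ω | ∀ i, C i ω = c i} = ∏ i, ν {ω | C i ω = c i} := by
  suffices key : ∀ F : Finset ι, ν {ω | ∀ i ∈ F, C i ω = c i} = ∏ i ∈ F, ν {ω | C i ω = c i} by
    simpa using key Finset.univ
  intro F
  induction F using Finset.induction_on with
  | empty => simp
  | @insert i F hi ih =>
    let rest : Ω → ∀ j : {j // j ≠ i}, χ j := fun ω j => C j ω
    let S := Finset.univ.filter fun v : ∀ j : {j // j ≠ i}, χ j =>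
      ∀ j : {j // j ≠ i}, ↑j ∈ F → v j = c j
    have hS : rest ⁻¹' S = {ω | ∀ j ∈ F, C j ω = c j} := by
      ext ω
      simp only [S, rest, Finset.coe_filter, Finset.mem_univ, true_and, Set.mem_preimage,
        Set.mem_ofPred_eq, Subtype.forall]
      exact ⟨fun hω j hj => hω j (ne_of_mem_of_not_mem hj hi) hj, fun hω j _ hj => hω j hj⟩
    have hins : {ω | ∀ j ∈ insert i F, C j ω = c j} = {ω | C i ω = c i} ∩ rest ⁻¹' S := by
      rw [hS]; ext ω; simp
    rw [hins, measure_inter_preimage_eq_mul_of_fibers (measurable_pi_lambda rest fun j => hC j)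
      (h i) S, hS, ih, Finset.prod_insert hi]

lemma condProb_eq_ite_of_determined [IsFiniteMeasure P] {β γ : Type*} [DecidableEq β]
    {B : Ω → β} {Λ : Ω → γ} (f : γ → β) (hB : ∀ ω, B ω = f (Λ ω)) {l : γ}
    (hl : P {ω | Λ ω = l} ≠ 0) (b : β) :
    condProb P {ω | B ω = b} {ω | Λ ω = l} = if f l = b then 1 else 0 := by
  split_ifs with hfb
  · exact condProb_eq_one_of_subset hl fun ω hω => by
      simp only [Set.mem_ofPred_eq] at hω ⊢
      rw [hB, hω, hfb]
  · exact condProb_eq_zero_of_disjoint <| Set.disjoint_left.2 fun ω hb hω =>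
      hfb (by rw [← hω.out, ← hB]; exact hb)

lemma condProb_inter_eq_ite_mul_of_determined {β γ : Type*} [DecidableEq β]
    {B : Ω → β} {Λ : Ω → γ} (f : γ → β) (hB : ∀ ω, B ω = f (Λ ω)) {l : γ} {t : Set Ω}
    (ht : t ⊆ {ω | Λ ω = l}) (b : β) (s : Set Ω) :
    condProb P ({ω | B ω = b} ∩ s) t = (if f l = b then 1 else 0) * condProb P s t := by
  split_ifs with hfb
  · rw [one_mul, condProb, condProb, Set.inter_assoc, Set.inter_eq_right.2]
    intro ω hω
    simp only [Set.mem_ofPred_eq]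
    rw [hB, (ht hω.2).out, hfb]
  · rw [zero_mul]
    refine condProb_eq_zero_of_disjoint <| Set.disjoint_left.2 fun ω hω hωt => hfb ?_
    rw [← (ht hωt).out, ← hB]
    exact hω.1

lemma condProb_forall_eq_prod_of_condIndepFun_rest [IsFiniteMeasure P] [Fintype ι]
    {χ : ι → Type*} [∀ i, Fintype (χ i)] [∀ i, MeasurableSpace (χ i)]
    [∀ i, MeasurableSingletonClass (χ i)]
    {C : ∀ i, Ω → χ i} {W : Ω → δ} (hC : ∀ i, Measurable (C i))
    (h : ∀ i, CondIndepFun P (C i) (fun ω => fun j : {j // j ≠ i} => C j ω) W)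
    (c : ∀ i, χ i) {w : δ} (hw : 0 < P {ω | W ω = w}) :
    condProb P {ω | ∀ i, C i ω = c i} {ω | W ω = w} =
      ∏ i, condProb P {ω | C i ω = c i} {ω | W ω = w} := by
  have := ProbabilityTheory.cond_isProbabilityMeasure (μ := P) hw.ne'
  have hCc : ∀ i, MeasurableSet {ω | C i ω = c i} := fun i => hC i (measurableSet_singleton _)
  rw [condProb_eq_cond (by simpa only [Set.ofPred_forall] using MeasurableSet.iInter hCc),
    Finset.prod_congr rfl fun i _ => condProb_eq_cond (hCc i) _]
  exact measure_forall_eq_prod_of_indep_rest hC c fun i v =>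
    (h i).cond_inter (hC i) (measurable_pi_lambda _ fun j => hC j) (c i) v hw

lemma condProb_eq_of_condIndepFun_rest [IsFiniteMeasure P] {α : Type*} {ζ : ι → Type*}
    {X : Ω → α} {Z : ∀ i, Ω → ζ i} {W : Ω → δ} {i : ι}
    (h : CondIndepFun P X (fun ω => fun j : {j // j ≠ i} => Z j ω) (fun ω => (Z i ω, W ω)))
    (x : α) {z : ∀ i, ζ i} {w : δ} (hzw : P {ω | (fun j => Z j ω, W ω) = (z, w)} ≠ 0) :
    condProb P {ω | X ω = x} {ω | (fun j => Z j ω, W ω) = (z, w)} =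
      condProb P {ω | X ω = x} {ω | (Z i ω, W ω) = (z i, w)} := by
  have hset : {ω | (fun j : {j // j ≠ i} => Z j ω) = fun j : {j // j ≠ i} => z j} ∩
      {ω | (Z i ω, W ω) = (z i, w)} = {ω | (fun j => Z j ω, W ω) = (z, w)} := by
    ext ω
    simp only [Set.mem_inter_iff, Set.mem_ofPred_eq, funext_iff, Prod.mk.injEq, Subtype.forall]
    grind
  rw [← hset] at hzw ⊢
  exact h.condProb_inter x hzw

lemma condProb_eq_prod_of_hidden {κ γ : Type*} [IsFiniteMeasure P] [Fintype κ] [Fintype ι]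
    {β : κ → Type*} {χ ζ : ι → Type*}
    [∀ j, Fintype (χ j)] [∀ j, MeasurableSpace (χ j)] [∀ j, MeasurableSingletonClass (χ j)]
    {B : ∀ k, Ω → β k} {C : ∀ j, Ω → χ j} {Z : ∀ j, Ω → ζ j} {Λ : Ω → γ}
    (hC : ∀ j, Measurable (C j))
    (h_iv : ∀ i, CondIndepFun P (C i) (fun ω => fun j : {j // j ≠ i} => C j ω)
      (fun ω => ((fun j => Z j ω : ∀ j, ζ j), Λ ω)))
    (h_v : ∀ i, CondIndepFun P (C i) (fun ω => fun j : {j // j ≠ i} => Z j ω)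
      (fun ω => (Z i ω, Λ ω)))
    (f : γ → ∀ k, β k) (h_vi : ∀ ω k, B k ω = f (Λ ω) k)
    (b : ∀ k, β k) (c : ∀ j, χ j) (z : ∀ j, ζ j) (l : γ)
    (hzl : 0 < P {ω | ((fun j => Z j ω : ∀ j, ζ j), Λ ω) = (z, l)}) :
    condProb P {ω | ((fun k => B k ω : ∀ k, β k), (fun j => C j ω : ∀ j, χ j)) = (b, c)}
        {ω | ((fun j => Z j ω : ∀ j, ζ j), Λ ω) = (z, l)} =
      (∏ j, condProb P {ω | C j ω = c j} {ω | Z j ω = z j ∧ Λ ω = l}) *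
        ∏ k, condProb P {ω | B k ω = b k} {ω | Λ ω = l} := by
  have hsub : {ω | ((fun j => Z j ω : ∀ j, ζ j), Λ ω) = (z, l)} ⊆ {ω | Λ ω = l} :=
    fun ω hω => (Prod.mk_inj.1 hω).2
  have hl : P {ω | Λ ω = l} ≠ 0 := fun h0 => hzl.ne' (measure_mono_null hsub h0)
  have hBprod : ∏ k, condProb P {ω | B k ω = b k} {ω | Λ ω = l} = if f l = b then 1 else 0 := by
    rw [Finset.prod_congr rfl fun k _ =>
      condProb_eq_ite_of_determined (fun g => f g k) (fun ω => h_vi ω k) hl (b k),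
      Fintype.prod_boole]
    exact if_congr funext_iff.symm rfl rfl
  have hpair : {ω | ((fun k => B k ω : ∀ k, β k), (fun j => C j ω : ∀ j, χ j)) = (b, c)} =
      {ω | (fun k => B k ω) = b} ∩ {ω | ∀ j, C j ω = c j} :=
    Set.ext fun ω => Prod.mk_inj.trans (and_congr_right' funext_iff)
  rw [hpair, condProb_inter_eq_ite_mul_of_determined f (fun ω => funext (h_vi ω)) hsub, hBprod,
    condProb_forall_eq_prod_of_condIndepFun_rest hC h_iv c hzl, mul_comm]
  congr 1
  refine Finset.prod_congr rfl fun j _ => ?_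
  rw [condProb_eq_of_condIndepFun_rest (h_v j) _ hzl.ne']
  simp only [Prod.mk.injEq]

end Factorisation

theorem step4_factorisation_general
    {Ω υ γ : Type*} {m n : ℕ} {β : Fin m → Type*} {χ ζ : Fin n → Type*}
    [MeasurableSpace Ω]
    [∀ j, Fintype (χ j)] [∀ j, MeasurableSpace (χ j)] [∀ j, MeasurableSingletonClass (χ j)]
    [Fintype γ] [MeasurableSpace γ] [MeasurableSingletonClass γ]
    (P : Measure Ω) [IsProbabilityMeasure P]
    (B : ∀ k, Ω → β k) (C : ∀ j, Ω → χ j) (Y : Ω → υ) (Z : ∀ j, Ω → ζ j) (Λ : Ω → γ)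
    (hC : ∀ j, Measurable (C j))
    (hΛ : Measurable Λ)
    (h_i : ∀ (l : γ) (y : υ) (z : ∀ j, ζ j),
      P {ω | Λ ω = l ∧ (Y ω = y ∧ ∀ j, Z j ω = z j)} =
        P {ω | Λ ω = l} * P {ω | Y ω = y ∧ ∀ j, Z j ω = z j})
    (h_iii : CondIndepFun P
      (fun ω => ((fun k => B k ω : ∀ k, β k), (fun j => C j ω : ∀ j, χ j))) Y
      (fun ω => ((fun j => Z j ω : ∀ j, ζ j), Λ ω)))
    (h_iv : ∀ i : Fin n,
      CondIndepFun P (C i) (fun ω => fun j : {j : Fin n // j ≠ i} => C j ω)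
        (fun ω => ((fun j => Z j ω : ∀ j, ζ j), Λ ω)))
    (h_v : ∀ i : Fin n,
      CondIndepFun P (C i) (fun ω => fun j : {j : Fin n // j ≠ i} => Z j ω)
        (fun ω => (Z i ω, Λ ω)))
    (f : γ → ∀ k, β k) (h_vi : ∀ ω k, B k ω = f (Λ ω) k) :
    ∀ (b : ∀ k, β k) (c : ∀ j, χ j) (y : υ) (z : ∀ j, ζ j),
      0 < P {ω | Y ω = y ∧ ∀ j, Z j ω = z j} →
      condProb P {ω | (∀ k, B k ω = b k) ∧ ∀ j, C j ω = c j}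
          {ω | Y ω = y ∧ ∀ j, Z j ω = z j} =
        ∑ l ∈ Finset.univ.filter (fun l : γ => 0 < P {ω | Λ ω = l}),
          P {ω | Λ ω = l} *
            (∏ j, condProb P {ω | C j ω = c j} {ω | Z j ω = z j ∧ Λ ω = l}) *
            (∏ k, condProb P {ω | B k ω = b k} {ω | Λ ω = l}) := by
  intro b c y z hE
  rw [condProb, measure_eq_sum_inter_fiber_pos hΛ (_ ∩ _), div_eq_mul_inv, Finset.sum_mul]
  refine Finset.sum_congr rfl fun l hl => ?_
  set T := {ω | ((fun j => Z j ω : ∀ j, ζ j), Λ ω) = (z, l)}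
  have hYT : P ({ω | Y ω = y} ∩ T) = P {ω | Λ ω = l} * P {ω | Y ω = y ∧ ∀ j, Z j ω = z j} := by
    rw [← h_i]
    congr 1
    ext ω
    simp only [T, Set.mem_inter_iff, Set.mem_ofPred_eq, Prod.mk.injEq, funext_iff]
    tauto
  have hT : 0 < P T := (ENNReal.mul_pos (Finset.mem_filter.1 hl).2.ne' hE.ne').trans_le
    (hYT ▸ measure_mono Set.inter_subset_right)
  have hcell : {ω | (∀ k, B k ω = b k) ∧ ∀ j, C j ω = c j} ∩
      {ω | Y ω = y ∧ ∀ j, Z j ω = z j} ∩ {ω | Λ ω = l} =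
      {ω | ((fun k => B k ω : ∀ k, β k), (fun j => C j ω : ∀ j, χ j)) = (b, c)} ∩
        {ω | Y ω = y} ∩ T := by
    ext ω
    simp only [T, Set.mem_inter_iff, Set.mem_ofPred_eq, Prod.mk.injEq, funext_iff]
    tauto
  rw [hcell, h_iii.measure_inter (b, c) y hT,
    condProb_eq_prod_of_hidden hC h_iv h_v f h_vi b c z l hT, hYT, ← mul_assoc,
    ← div_eq_mul_inv, ENNReal.mul_div_cancel_right hE.ne' (measure_ne_top P _)]
  ring

/-- (Step 4 of the proof of Theorem 1.) From (i) `Λ ⊥ (Y, Z)`,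
(ii) `B ⊥ Z | Λ`, (iii) `(B, C) ⊥ Y | (Z, Λ)`, (iv) `C_i ⊥ (C_j)_{j ≠ i} | (Z, Λ)`,
(v) `C_i ⊥ (Z_j)_{j ≠ i} | (Z_i, Λ)`, and (vi) `B` determined by `Λ`, it follows that
`P(B = b, C = c | Y = y, Z = z)
  = Σ_λ P(Λ = λ) · Π_j P(C_j = c_j | Z_j = z_j, Λ = λ) · Π_k P(B_k = b_k | Λ = λ)`. -/
theorem step4_factorisation
    {Ω υ γ : Type*} {m n : ℕ} {β : Fin m → Type*} {χ ζ : Fin n → Type*}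
    [MeasurableSpace Ω]
    [∀ k, Fintype (β k)] [∀ k, MeasurableSpace (β k)] [∀ k, MeasurableSingletonClass (β k)]
    [∀ j, Fintype (χ j)] [∀ j, MeasurableSpace (χ j)] [∀ j, MeasurableSingletonClass (χ j)]
    [∀ j, Fintype (ζ j)] [∀ j, MeasurableSpace (ζ j)] [∀ j, MeasurableSingletonClass (ζ j)]
    [Fintype υ] [MeasurableSpace υ] [MeasurableSingletonClass υ]
    [Fintype γ] [MeasurableSpace γ] [MeasurableSingletonClass γ]
    (P : Measure Ω) [IsProbabilityMeasure P]
    (B : ∀ k, Ω → β k) (C : ∀ j, Ω → χ j) (Y : Ω → υ) (Z : ∀ j, Ω → ζ j) (Λ : Ω → γ)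
    (hB : ∀ k, Measurable (B k)) (hC : ∀ j, Measurable (C j)) (hY : Measurable Y)
    (hZ : ∀ j, Measurable (Z j)) (hΛ : Measurable Λ)
    (h_i : ∀ (l : γ) (y : υ) (z : ∀ j, ζ j),
      P {ω | Λ ω = l ∧ (Y ω = y ∧ ∀ j, Z j ω = z j)} =
        P {ω | Λ ω = l} * P {ω | Y ω = y ∧ ∀ j, Z j ω = z j})
    (h_ii : CondIndepFun P (fun ω => fun k => B k ω) (fun ω => fun j => Z j ω) Λ)
    (h_iii : CondIndepFun P
      (fun ω => ((fun k => B k ω : ∀ k, β k), (fun j => C j ω : ∀ j, χ j))) Y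
      (fun ω => ((fun j => Z j ω : ∀ j, ζ j), Λ ω)))
    (h_iv : ∀ i : Fin n,
      CondIndepFun P (C i) (fun ω => fun j : {j : Fin n // j ≠ i} => C j ω)
        (fun ω => ((fun j => Z j ω : ∀ j, ζ j), Λ ω)))
    (h_v : ∀ i : Fin n,
      CondIndepFun P (C i) (fun ω => fun j : {j : Fin n // j ≠ i} => Z j ω)
        (fun ω => (Z i ω, Λ ω)))
    (f : γ → ∀ k, β k) (h_vi : ∀ ω k, B k ω = f (Λ ω) k) :
    ∀ (b : ∀ k, β k) (c : ∀ j, χ j) (y : υ) (z : ∀ j, ζ j),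
      0 < P {ω | Y ω = y ∧ ∀ j, Z j ω = z j} →
      condProb P {ω | (∀ k, B k ω = b k) ∧ ∀ j, C j ω = c j}
          {ω | Y ω = y ∧ ∀ j, Z j ω = z j} =
        ∑ l ∈ Finset.univ.filter (fun l : γ => 0 < P {ω | Λ ω = l}),
          P {ω | Λ ω = l} *
            (∏ j, condProb P {ω | C j ω = c j} {ω | Z j ω = z j ∧ Λ ω = l}) *
            (∏ k, condProb P {ω | B k ω = b k} {ω | Λ ω = l}) :=
  step4_factorisation_general P B C Y Z Λ hC hΛ h_i h_iii h_iv h_v f h_vi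
end
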